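/- arXiv:2309.02176 — 3 statements merged into one kernel-verified Lean document; each statement's English description precedes it below -/
import Mathlib

section
/- Let G be a group with an involutive automorphism Θ, let K = Fix(Θ), and suppose τ(G) ∩ K = {e}, where τ(g) = g·Θ(g⁻¹). Define μ on the coset space G/K by μ(gK, hK) = τ(g)·Θ(h)·K. Then μ is well defined and satisfies: (S1) μ(x,x) = x, (S2) μ(x, μ(x,y)) = y, and (S3) μ(x, μ(y,z)) = μ(μ(x,y), μ(x,z)) for all x, y, z in G/K. -/
/-- The map `μ(gK, hK) = τ(g)Θ(h)K` is well defined on the coset space `G ⧸ K`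
(where `K = Fix Θ` and `τ(G) ∩ K = {e}`) and satisfies the Loos axioms S1, S2, S3. -/
theorem coset_reflection_welldefined_and_S1_S2_S3 {G : Type*} [Group G] (Θ : G ≃* G)
    (hΘ : ∀ g : G, Θ (Θ g) = g) (K : Subgroup G) (hK : ∀ g : G, g ∈ K ↔ Θ g = g)
    (τ : G → G) (hτ : ∀ g : G, τ g = g * Θ g⁻¹)
    (htriv : ∀ g : G, τ g ∈ K → τ g = 1) :
    ∃ μ : G ⧸ K → G ⧸ K → G ⧸ K,
      (∀ g h : G, μ (g : G ⧸ K) (h : G ⧸ K) = ((τ g * Θ h : G) : G ⧸ K)) ∧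
      (∀ x : G ⧸ K, μ x x = x) ∧
      (∀ x y : G ⧸ K, μ x (μ x y) = y) ∧
      (∀ x y z : G ⧸ K, μ x (μ y z) = μ (μ x y) (μ x z)) := by
  -- τ is invariant under right multiplication by elements of K
  have hτK : ∀ (g k : G), k ∈ K → τ (g * k) = τ g := by
    intro g k hk
    have hk' : Θ k = k := (hK k).mp hk
    simp [hτ, map_mul, map_inv, hk', mul_assoc]
  have hΘτ : ∀ g : G, Θ (τ g) = (τ g)⁻¹ := by
    intro g
    simp [hτ, map_mul, map_inv, hΘ]
  -- define μ
  refine ⟨fun x y => Quotient.liftOn₂' x y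
      (fun g h => ((τ g * Θ h : G) : G ⧸ K)) ?_, ?_, ?_, ?_, ?_⟩
  · intro a b c d hac hbd
    rw [QuotientGroup.leftRel_apply] at hac hbd
    have hbd' : Θ (b⁻¹ * d) = b⁻¹ * d := (hK _).mp hbd
    have h1 : τ c = τ a := by
      conv_lhs => rw [show c = a * (a⁻¹ * c) by group]
      exact hτK a _ hac
    have h2 : Θ d = Θ b * (b⁻¹ * d) := by
      conv_lhs => rw [show d = b * (b⁻¹ * d) by group]
      rw [map_mul, hbd']
    show ((τ a * Θ b : G) : G ⧸ K) = ((τ c * Θ d : G) : G ⧸ K)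
    rw [h1, h2, ← mul_assoc]
    exact (QuotientGroup.eq).mpr (by simpa [mul_assoc] using hbd)
  · intro g h; rfl
  · -- S1
    intro x
    refine QuotientGroup.induction_on x ?_
    intro g
    show ((τ g * Θ g : G) : G ⧸ K) = (g : G ⧸ K)
    have : τ g * Θ g = g := by simp [hτ, map_inv]
    rw [this]
  · -- S2
    intro x y
    refine QuotientGroup.induction_on x fun g => QuotientGroup.induction_on y fun h => ?_
    show ((τ g * Θ (τ g * Θ h) : G) : G ⧸ K) = (h : G ⧸ K)
    have : τ g * Θ (τ g * Θ h) = h := by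
      rw [map_mul, hΘτ, hΘ, ← mul_assoc, mul_inv_cancel, one_mul]
    rw [this]
  · -- S3
    intro x y z
    refine QuotientGroup.induction_on x fun g => QuotientGroup.induction_on y fun h =>
      QuotientGroup.induction_on z fun l => ?_
    show ((τ g * Θ (τ h * Θ l) : G) : G ⧸ K)
        = ((τ (τ g * Θ h) * Θ (τ g * Θ l) : G) : G ⧸ K)
    have key : τ g * Θ (τ h * Θ l) = τ (τ g * Θ h) * Θ (τ g * Θ l) := by
      rw [hτ (τ g * Θ h)]
      simp only [map_mul, hΘτ, hΘ, mul_inv_rev, map_inv, inv_inv]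
      rw [hτ h, mul_inv_rev, map_inv, inv_inv]
      group
    rw [key]
end

section
/- Let G be a group with involutive automorphism Θ, K = Fix(Θ), and μ(gK, hK) = τ(g)Θ(h)K on G/K. If τ(G) ∩ K = {e}, then μ satisfies the global axiom S4: μ(x,y) = y implies x = y for all x, y ∈ G/K. -/
/-- If `τ(G) ∩ K = {e}`, then the reflection map `μ(gK,hK) = τ(g)Θ(h)K` on `G ⧸ K`
satisfies the global axiom S4: `μ x y = y` implies `x = y`. -/
theorem coset_reflection_S4_global {G : Type*} [Group G] (Θ : G ≃* G)
    (hΘ : ∀ g : G, Θ (Θ g) = g) (K : Subgroup G) (hK : ∀ g : G, g ∈ K ↔ Θ g = g)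
    (τ : G → G) (hτ : ∀ g : G, τ g = g * Θ g⁻¹)
    (htriv : ∀ g : G, τ g ∈ K → τ g = 1)
    (μ : G ⧸ K → G ⧸ K → G ⧸ K)
    (hμ : ∀ g h : G, μ (g : G ⧸ K) (h : G ⧸ K) = ((τ g * Θ h : G) : G ⧸ K)) :
    ∀ x y : G ⧸ K, μ x y = y → x = y := by
  intro x y
  induction x using QuotientGroup.induction_on with
  | H g =>
  induction y using QuotientGroup.induction_on with
  | H h =>
  intro hxy
  rw [hμ] at hxy
  have hmem : (τ g * Θ h)⁻¹ * h ∈ K := (QuotientGroup.eq).1 hxy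
  have hmem' : h⁻¹ * τ g * Θ h ∈ K := by
    have := K.inv_mem hmem
    simpa [mul_assoc] using this
  have key : τ (h⁻¹ * g) = h⁻¹ * τ g * Θ h := by
    simp [hτ, mul_assoc]
  have h1 : τ (h⁻¹ * g) = 1 := htriv _ (key ▸ hmem')
  have h2 : h⁻¹ * g ∈ K := by
    rw [hK]
    have := h1
    rw [hτ] at this
    have : h⁻¹ * g = Θ (h⁻¹ * g) := by
      have := mul_eq_one_iff_eq_inv.1 this
      simpa using this
    exact this.symm
  have : (g : G ⧸ K) = (h : G ⧸ K) := (QuotientGroup.eq).2 (by simpa using K.inv_mem h2)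
  exact this
end

section
/- Let (X, μ) be a symmetric space in the Loos sense with base point e, and for x ∈ X let s_x denote the point reflection. Define T(X) = {s_x ∘ s_e : x ∈ X} and on T(X) define μ_T(s, t) = s·t⁻¹·s (composition of bijections). Then the map q : X → T(X), q(x) = s_x ∘ s_e, satisfies q(μ(x,y)) = μ_T(q(x), q(y)) for all x, y ∈ X. -/
/-- In a Loos symmetric space `(X, μ)` with base point `e` satisfying S1–S3 and
the global S4, the map `q(x) = s_x ∘ s_e` into the set
`T(X) = {s_x ∘ s_e : x ∈ X}` with `μ_T(s,t) = s ∘ t⁻¹ ∘ s` satisfies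
`q(μ(x,y)) = μ_T(q(x), q(y))`: explicitly, for any two-sided inverse `g` of
`q(y)`, one has `q(x) ∘ g ∘ q(x) = q(μ(x,y))`. -/
theorem transvection_model_reflection {X : Type*} (μ : X → X → X) (e : X)
    (S1 : ∀ x, μ x x = x)
    (S2 : ∀ x y, μ x (μ x y) = y)
    (S3 : ∀ x y z, μ x (μ y z) = μ (μ x y) (μ x z))
    (S4 : ∀ x y, μ x y = y → x = y)
    (s : X → X → X) (hs : ∀ p x, s p x = μ p x)
    (q : X → X → X) (hq : ∀ x, q x = s x ∘ s e) :
    ∀ (x y : X) (g : X → X),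
      Function.LeftInverse g (q y) → Function.RightInverse g (q y) →
      q x ∘ g ∘ q x = q (μ x y) := by
  intro x y g hl hr
  have hg : ∀ z, g z = μ e (μ y z) := by
    intro z
    have h := hl (μ e (μ y z))
    simpa [hq, hs, Function.comp, S2] using h
  funext z
  simp only [hq, hs, Function.comp, hg, S2]
  rw [S3 x y (μ x (μ e z)), S2]
end
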